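/- arXiv:1707.07536 — 3 statements merged into one kernel-verified Lean document; each statement's English description precedes it below -/
import Mathlib

section
/- Let K be a complete non-archimedean valued field and let c₀ = c₀(ℕ, K) with the supremum norm. If T : c₀ → c₀ is a continuous linear operator and for every y ∈ c₀ the limit lim_{i→∞} ⟨T e_i, y⟩ = 0 holds (where ⟨x,y⟩ = Σ x_i y_i and (e_i) is the canonical basis), and moreover lim_{n→∞} ‖T e_n‖ = 0, then T is a compact operator (i.e., T maps the unit ball to a compactoid set). -/
open Filter Topology

noncomputable section

/-- `c₀(ℕ, K)`: the space of `K`-valued null sequences (zero-at-infinity functions on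
discrete `ℕ`), with the supremum norm. -/
abbrev Cz (K : Type) [NontriviallyNormedField K] := ZeroAtInftyContinuousMap ℕ K

/-- The canonical bilinear form `⟨x, y⟩ = ∑ᵢ xᵢ yᵢ` on `c₀`. -/
def pr {K : Type} [NontriviallyNormedField K] (x y : Cz K) : K := ∑' i, x i * y i

/-- The canonical basis vector `eᵢ` of `c₀`. -/
def e (K : Type) [NontriviallyNormedField K] (i : ℕ) : Cz K where
  toFun := fun j => if j = i then (1 : K) else 0
  continuous_toFun := continuous_of_discreteTopology
  zero_at_infty' := by
    rw [cocompact_eq_atTop (α := ℕ)]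
    apply tendsto_nhds_of_eventually_eq
    filter_upwards [eventually_gt_atTop i] with j hj
    simp [hj.ne']

/-- A continuous linear operator on `c₀` is compact iff it is a uniform limit of
finite-rank continuous operators (equivalently, it maps the unit ball to a compactoid). -/
def IsCompactOp {K : Type} [NontriviallyNormedField K] (T : Cz K →L[K] Cz K) : Prop :=
  ∀ ε : ℝ, 0 < ε → ∃ S : Cz K →L[K] Cz K,
    Module.Finite K (LinearMap.range (S : Cz K →ₗ[K] Cz K)) ∧ ‖T - S‖ ≤ ε

/-- The closed unit ball of a non-archimedean valued field, as a subring
(the valuation ring). -/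
def valRing {K : Type} [NontriviallyNormedField K]
    (hna : IsNonarchimedean (norm : K → ℝ)) : Subring K where
  carrier := {x : K | ‖x‖ ≤ 1}
  mul_mem' := fun {a b} ha hb => by
    simp only [Set.mem_setOf_eq] at *
    rw [norm_mul]
    nlinarith [norm_nonneg a, norm_nonneg b]
  one_mem' := by simp
  add_mem' := fun {a b} ha hb => by
    simp only [Set.mem_setOf_eq] at *
    exact (hna a b).trans (max_le ha hb)
  zero_mem' := by simp
  neg_mem' := fun {a} ha => by simpa using ha

/-- The maximal ideal (open unit ball) of the valuation ring. -/
def valIdeal {K : Type} [NontriviallyNormedField K]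
    (hna : IsNonarchimedean (norm : K → ℝ)) : Ideal (valRing hna) where
  carrier := {x | ‖(x : K)‖ < 1}
  add_mem' := fun {a b} ha hb => by
    simp only [Set.mem_setOf_eq] at *
    push_cast
    exact ((hna a b)).trans_lt (max_lt ha hb)
  zero_mem' := by simp
  smul_mem' := fun c x hx => by
    simp only [Set.mem_setOf_eq, smul_eq_mul] at *
    push_cast
    rw [norm_mul]
    calc ‖(c : K)‖ * ‖(x : K)‖ ≤ 1 * ‖(x : K)‖ := by
          exact mul_le_mul_of_nonneg_right c.2 (norm_nonneg _)
      _ = ‖(x : K)‖ := one_mul _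
      _ < 1 := hx

/-- The residue class field of a non-archimedean valued field. -/
abbrev Residue {K : Type} [NontriviallyNormedField K]
    (hna : IsNonarchimedean (norm : K → ℝ)) : Type :=
  valRing hna ⧸ valIdeal hna

/-- A commutative ring is formally real if `-1` is not a sum of squares. -/
def FormallyRealRing (R : Type) [CommRing R] : Prop :=
  ¬ ∃ (n : ℕ) (a : Fin n → R), (∑ i, a i ^ 2) = -1


/-!
The finite-rank operators `S_N x = ∑_{i<N} xᵢ • T eᵢ` approximate `T`: since `x = ∑ xᵢ • eᵢ`
converges in `c₀`, we get `T x - S_N x = ∑_{i≥N} xᵢ • T eᵢ`, and by the ultrametric inequality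
its norm is at most `(sup_{i≥N} ‖T eᵢ‖) · ‖x‖`, which tends to `0` with `N`.
-/

open BoundedContinuousFunction ZeroAtInfty

instance BoundedContinuousFunction.isUltrametricDist {α β : Type*} [TopologicalSpace α]
    [PseudoMetricSpace β] [IsUltrametricDist β] : IsUltrametricDist (α →ᵇ β) where
  dist_triangle_max f g h :=
    (dist_le (by positivity)).2 fun x =>
      (IsUltrametricDist.dist_triangle_max (f x) (g x) (h x)).trans
        (max_le_max (f.dist_coe_le_dist x) (g.dist_coe_le_dist x))

instance ZeroAtInftyContinuousMap.isUltrametricDist {α β : Type*} [TopologicalSpace α]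
    [PseudoMetricSpace β] [Zero β] [IsUltrametricDist β] : IsUltrametricDist C₀(α, β) where
  dist_triangle_max f g h := by
    simpa only [← ZeroAtInftyContinuousMap.dist_toBCF_eq_dist] using
      IsUltrametricDist.dist_triangle_max f.toBCF g.toBCF h.toBCF

namespace Cz

variable {K : Type} [NontriviallyNormedField K]

theorem norm_le {x : Cz K} {C : ℝ} (hC : 0 ≤ C) : ‖x‖ ≤ C ↔ ∀ i, ‖x i‖ ≤ C := by
  rw [← ZeroAtInftyContinuousMap.norm_toBCF_eq_norm]
  exact BoundedContinuousFunction.norm_le hC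

theorem norm_apply_le (x : Cz K) (i : ℕ) : ‖x i‖ ≤ ‖x‖ :=
  (norm_le (norm_nonneg x)).1 le_rfl i

theorem tendsto_apply_atTop (x : Cz K) : Tendsto x atTop (𝓝 0) := by
  rw [← cocompact_eq_atTop]
  exact x.zero_at_infty'

theorem e_apply (i j : ℕ) : e K i j = if j = i then 1 else 0 := rfl

variable (K) in
def evalCLM (i : ℕ) : Cz K →L[K] K :=
  LinearMap.mkContinuous
    { toFun := fun x => x i
      map_add' := fun _ _ => rfl
      map_smul' := fun _ _ => rfl } 1
    fun x => by simpa using norm_apply_le x i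

@[simp]
theorem evalCLM_apply (i : ℕ) (x : Cz K) : evalCLM K i x = x i := rfl

theorem sum_smul_e_apply (x : Cz K) (s : Finset ℕ) (j : ℕ) :
    (∑ i ∈ s, x i • e K i) j = if j ∈ s then x j else 0 := by
  rw [← evalCLM_apply, map_sum]
  simp [e_apply]

theorem hasSum_smul_e (x : Cz K) : HasSum (fun i => x i • e K i) x := by
  rw [HasSum, SummationFilter.unconditional_filter, Metric.tendsto_atTop]
  intro ε hε
  obtain ⟨N, hN⟩ := Metric.tendsto_atTop.1 (tendsto_apply_atTop x) _ (half_pos hε)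
  refine ⟨Finset.range N, fun s hs => ?_⟩
  rw [dist_eq_norm]
  refine ((norm_le (half_pos hε).le).2 fun j => ?_).trans_lt (half_lt_self hε)
  rw [ZeroAtInftyContinuousMap.sub_apply, sum_smul_e_apply]
  split_ifs with hj
  · simpa using (half_pos hε).le
  · simpa using (hN j (not_lt.1 fun hjN => hj (hs (Finset.mem_range.2 hjN)))).le

variable {E : Type} [NormedAddCommGroup E] [NormedSpace K E]

theorem norm_sub_sum_le [IsUltrametricDist E] (T : Cz K →L[K] E) {N : ℕ} {ε : ℝ} (hε : 0 ≤ ε)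
    (hT : ∀ n ≥ N, ‖T (e K n)‖ ≤ ε) (x : Cz K) :
    ‖T x - ∑ i ∈ Finset.range N, x i • T (e K i)‖ ≤ ε * ‖x‖ := by
  have hsum : HasSum (fun i => x i • T (e K i)) (T x) := by
    simpa only [map_smul] using (hasSum_smul_e x).mapL T
  rw [← hsum.tsum_eq, ← hsum.summable.sum_add_tsum_nat_add N, add_sub_cancel_left]
  refine IsUltrametricDist.norm_tsum_le_of_forall_le_of_nonneg (by positivity) fun i => ?_
  rw [norm_smul, mul_comm]
  exact mul_le_mul (hT _ (Nat.le_add_left N i)) (norm_apply_le x _) (norm_nonneg _) hε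

def truncate (T : Cz K →L[K] E) (N : ℕ) : Cz K →L[K] E :=
  ∑ i ∈ Finset.range N, (evalCLM K i).smulRight (T (e K i))

theorem truncate_apply (T : Cz K →L[K] E) (N : ℕ) (x : Cz K) :
    truncate T N x = ∑ i ∈ Finset.range N, x i • T (e K i) := by
  simp [truncate]

theorem finite_range_truncate (T : Cz K →L[K] E) (N : ℕ) :
    Module.Finite K (LinearMap.range (truncate T N : Cz K →ₗ[K] E)) := by
  have hspan : LinearMap.range (truncate T N : Cz K →ₗ[K] E) ≤
      Submodule.span K ((fun i => T (e K i)) '' Finset.range N) := by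
    rintro _ ⟨x, rfl⟩
    rw [ContinuousLinearMap.coe_coe, truncate_apply]
    exact Submodule.sum_mem _ fun i hi =>
      Submodule.smul_mem _ _ (Submodule.subset_span ⟨i, hi, rfl⟩)
  have : Module.Finite K (Submodule.span K ((fun i => T (e K i)) '' Finset.range N)) :=
    Module.Finite.span_of_finite K ((Finset.range N).finite_toSet.image _)
  exact Submodule.finiteDimensional_of_le hspan

theorem norm_sub_truncate_le [IsUltrametricDist E] (T : Cz K →L[K] E) {N : ℕ} {ε : ℝ}
    (hε : 0 ≤ ε) (hT : ∀ n ≥ N, ‖T (e K n)‖ ≤ ε) : ‖T - truncate T N‖ ≤ ε :=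
  ContinuousLinearMap.opNorm_le_bound _ hε fun x => by
    simpa only [_root_.sub_apply, truncate_apply] using norm_sub_sum_le T hε hT x

end Cz

theorem stmt0_general {K : Type} [NontriviallyNormedField K]
    (hna : IsNonarchimedean (norm : K → ℝ))
    (T : Cz K →L[K] Cz K)
    (h2 : Tendsto (fun n => ‖T (e K n)‖) atTop (𝓝 (0 : ℝ))) :
    IsCompactOp T := by
  have := IsUltrametricDist.isUltrametricDist_of_isNonarchimedean_norm hna
  intro ε hε
  obtain ⟨N, hN⟩ := eventually_atTop.1 (h2.eventually (ge_mem_nhds hε))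
  exact ⟨Cz.truncate T N, Cz.finite_range_truncate T N, Cz.norm_sub_truncate_le T hε.le hN⟩

theorem stmt0 {K : Type} [NontriviallyNormedField K] [CompleteSpace K]
    (hna : IsNonarchimedean (norm : K → ℝ))
    (hres : FormallyRealRing (Residue hna))
    (T : Cz K →L[K] Cz K)
    (h1 : ∀ y : Cz K, Tendsto (fun i => pr (T (e K i)) y) atTop (𝓝 0))
    (h2 : Tendsto (fun n => ‖T (e K n)‖) atTop (𝓝 (0 : ℝ))) :
    IsCompactOp T :=
  stmt0_general hna T h2
end
end

section
/- Let K be a complete non-archimedean valued field whose residue class field is formally real. Then the bilinear form ⟨x,y⟩ = Σ_{i=1}^∞ x_i y_i on c₀ × c₀ satisfies |⟨x,x⟩| = ‖x‖_∞² for every x ∈ c₀; in particular ⟨x,x⟩ = 0 implies x = 0. -/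
open Filter Topology

noncomputable section

/-!
If `‖a i‖ ≤ ‖a i₀‖` for all `i`, then `∑_{i ∈ s} a i ^ 2 = a i₀ ^ 2 * (1 + ∑_{i ≠ i₀} b i ^ 2)`
with every `b i = a i / a i₀` in the valuation ring. Since the residue field is formally real,
`1 + ∑ b i ^ 2` has nonzero residue, i.e. norm `1`; so every finite partial sum of `⟨x, x⟩`
containing an index where `‖x i‖` attains `‖x‖` has norm exactly `‖x‖ ^ 2`, and so has the limit.
-/

theorem FormallyRealRing.one_add_sum_sq_ne_zero {R : Type} {ι : Type*} [CommRing R]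
    (hR : FormallyRealRing R) (s : Finset ι) (a : ι → R) : 1 + ∑ i ∈ s, a i ^ 2 ≠ 0 := by
  intro h
  refine hR ⟨s.card, fun j => a (s.equivFin.symm j), ?_⟩
  rw [← eq_neg_of_add_eq_zero_right h, ← s.sum_coe_sort]
  exact s.equivFin.symm.sum_comp (fun i => a i ^ 2)

theorem norm_one_add_sum_sq_valRing {K : Type} {ι : Type*} [NontriviallyNormedField K]
    {hna : IsNonarchimedean (norm : K → ℝ)} (hres : FormallyRealRing (Residue hna))
    (s : Finset ι) (b : ι → valRing hna) :
    ‖((1 + ∑ i ∈ s, b i ^ 2 : valRing hna) : K)‖ = 1 := by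
  refine le_antisymm (1 + ∑ i ∈ s, b i ^ 2).2 (not_lt.mp fun hlt => ?_)
  apply hres.one_add_sum_sq_ne_zero s (fun i => Ideal.Quotient.mk (valIdeal hna) (b i))
  simpa using Ideal.Quotient.eq_zero_iff_mem.mpr (show _ ∈ valIdeal hna from hlt)

theorem norm_sum_sq_of_forall_norm_le {K : Type} {ι : Type*} [NontriviallyNormedField K]
    {hna : IsNonarchimedean (norm : K → ℝ)} (hres : FormallyRealRing (Residue hna))
    (a : ι → K) {i₀ : ι} (hmax : ∀ i, ‖a i‖ ≤ ‖a i₀‖) {s : Finset ι} (hi₀ : i₀ ∈ s) :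
    ‖∑ i ∈ s, a i ^ 2‖ = ‖a i₀‖ ^ 2 := by
  classical
  rcases eq_or_ne (a i₀) 0 with h0 | h0
  · have ha (i : ι) : a i = 0 := norm_le_zero_iff.mp (by simpa [h0] using hmax i)
    simp [ha]
  let b : ι → valRing hna := fun i =>
    ⟨a i / a i₀, by
      show ‖a i / a i₀‖ ≤ 1
      rw [norm_div]
      exact div_le_one_of_le₀ (hmax i) (norm_nonneg _)⟩
  have hsum :
      ∑ i ∈ s, a i ^ 2 = a i₀ ^ 2 * ((1 + ∑ i ∈ s.erase i₀, b i ^ 2 : valRing hna) : K) := by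
    push_cast
    rw [← Finset.add_sum_erase s _ hi₀, mul_add, Finset.mul_sum]
    congr 1
    · ring
    · refine Finset.sum_congr rfl fun i _ => ?_
      simp only [b]
      field_simp
  rw [hsum, norm_mul, norm_one_add_sum_sq_valRing hres, norm_pow, mul_one]

theorem ZeroAtInftyContinuousMap.exists_norm_apply_eq_norm {α E : Type*} [TopologicalSpace α]
    [Nonempty α] [NormedAddCommGroup E] (x : ZeroAtInftyContinuousMap α E) :
    ∃ i, ‖x i‖ = ‖x‖ := by
  obtain ⟨i₀, hi₀⟩ : ∃ i₀, ∀ i, ‖x i‖ ≤ ‖x i₀‖ := by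
    by_cases hx : ∀ i, x i = 0
    · exact ⟨Classical.arbitrary α, fun i => by simp [hx]⟩
    obtain ⟨j, hj⟩ := not_forall.mp hx
    refine x.continuous.norm.exists_forall_ge' j ?_
    have hlim := (zero_at_infty x).norm
    rw [norm_zero] at hlim
    exact (hlim.eventually_lt_const (norm_pos_iff.mpr hj)).mono fun i hi => hi.le
  refine ⟨i₀, le_antisymm ?_ ?_⟩
  · simpa using x.toBCF.norm_coe_le_norm i₀
  · rw [← norm_toBCF_eq_norm]
    exact (BoundedContinuousFunction.norm_le (norm_nonneg _)).mpr hi₀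

theorem norm_pr_self {K : Type} [NontriviallyNormedField K] [CompleteSpace K]
    {hna : IsNonarchimedean (norm : K → ℝ)} (hres : FormallyRealRing (Residue hna)) (x : Cz K) :
    ‖pr x x‖ = ‖x‖ ^ 2 := by
  have : IsUltrametricDist K := .isUltrametricDist_of_isNonarchimedean_norm hna
  obtain ⟨i₀, hi₀⟩ := x.exists_norm_apply_eq_norm
  have hmax (i : ℕ) : ‖x i‖ ≤ ‖x i₀‖ := hi₀ ▸ x.toBCF.norm_coe_le_norm i
  have hsum : HasSum (fun i => x i ^ 2) (pr x x) := by
    simp only [pr, ← sq]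
    refine (NonarchimedeanAddGroup.summable_of_tendsto_cofinite_zero ?_).hasSum
    have hlim := (zero_at_infty x).pow 2
    rwa [cocompact_eq_cofinite, zero_pow two_ne_zero] at hlim
  refine tendsto_nhds_unique hsum.norm (tendsto_const_nhds.congr' ?_)
  filter_upwards [eventually_ge_atTop {i₀}] with s hs
  rw [norm_sum_sq_of_forall_norm_le hres x hmax (Finset.singleton_subset_iff.mp hs), hi₀]

theorem stmt1 {K : Type} [NontriviallyNormedField K] [CompleteSpace K]
    (hna : IsNonarchimedean (norm : K → ℝ))
    (hres : FormallyRealRing (Residue hna)) :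
    (∀ x : Cz K, ‖pr x x‖ = ‖x‖ ^ 2) ∧ (∀ x : Cz K, pr x x = 0 → x = 0) := by
  refine ⟨norm_pr_self hres, fun x hx => norm_eq_zero.mp <| (pow_eq_zero_iff two_ne_zero).mp ?_⟩
  rw [← norm_pr_self hres, hx, norm_zero]
end
end

section
/- Let K be a complete non-archimedean valued field and c₀ the space of K-valued null sequences. The linear operator T : c₀ → c₀ defined by T(x) = (Σ_{i=1}^∞ x_i) e₁ is continuous but does not admit an adjoint with respect to the bilinear form ⟨x,y⟩ = Σ x_i y_i; that is, there is no continuous linear S : c₀ → c₀ with ⟨T x, y⟩ = ⟨x, S y⟩ for all x, y ∈ c₀. -/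
/-!
In an ultrametric space `‖∑ xₙ‖ ≤ supₙ ‖xₙ‖`, so summation is a contraction `c₀ → K` and
`T = (∑ xₙ) • e₀` is continuous. If `S` were an adjoint of `T`, then
`(S e₀)ₙ = ⟨eₙ, S e₀⟩ = ⟨T eₙ, e₀⟩ = 1` for every `n`, so `S e₀` would not be a null sequence.
-/

open Filter Topology

noncomputable section

open scoped ZeroAtInfty

namespace ZeroAtInftyContinuousMap

variable {E : Type*} [NormedAddCommGroup E]

theorem tendsto_cofinite_zero (x : C₀(ℕ, E)) : Tendsto x cofinite (𝓝 0) :=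
  cocompact_eq_cofinite ℕ ▸ zero_at_infty x

theorem eq_zero_of_forall_apply_eq {x : C₀(ℕ, E)} {c : E} (hx : ∀ n, x n = c) : c = 0 :=
  tendsto_nhds_unique (tendsto_const_nhds.congr fun n => (hx n).symm) (tendsto_cofinite_zero x)

theorem norm_apply_le (x : C₀(ℕ, E)) (n : ℕ) : ‖x n‖ ≤ ‖x‖ :=
  norm_toBCF_eq_norm (f := x) ▸ x.toBCF.norm_coe_le_norm n

variable [IsUltrametricDist E]

theorem summable [CompleteSpace E] (x : C₀(ℕ, E)) : Summable x :=
  NonarchimedeanAddGroup.summable_of_tendsto_cofinite_zero (tendsto_cofinite_zero x)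

theorem norm_tsum_le (x : C₀(ℕ, E)) : ‖∑' n, x n‖ ≤ ‖x‖ :=
  (IsUltrametricDist.norm_tsum_le _).trans (ciSup_le (norm_apply_le x))

variable (𝕜 : Type*) [NormedField 𝕜] [NormedSpace 𝕜 E] [CompleteSpace E]

def tsumCLM : C₀(ℕ, E) →L[𝕜] E :=
  LinearMap.mkContinuous
    { toFun x := ∑' n, x n
      map_add' x y := (summable x).tsum_add (summable y)
      map_smul' c x := tsum_const_smul'' c }
    1 fun x => by simpa using norm_tsum_le x

end ZeroAtInftyContinuousMap

section

variable {K : Type} [NontriviallyNormedField K]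

theorem e_apply (i j : ℕ) : e K i j = if j = i then 1 else 0 := rfl

theorem tsum_e (i : ℕ) : ∑' j, e K i j = 1 := by
  rw [tsum_eq_single i fun j hj => by rw [e_apply, if_neg hj], e_apply, if_pos rfl]

theorem pr_e_left (i : ℕ) (x : Cz K) : pr (e K i) x = x i := by
  rw [pr, tsum_eq_single i fun j hj => by rw [e_apply, if_neg hj, zero_mul], e_apply, if_pos rfl,
    one_mul]

end

theorem stmt2 {K : Type} [NontriviallyNormedField K] [CompleteSpace K]
    (hna : IsNonarchimedean (norm : K → ℝ)) :
    (∃ T : Cz K →L[K] Cz K, ∀ x : Cz K, T x = (∑' i, x i) • e K 0) ∧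
    (∀ T : Cz K →L[K] Cz K, (∀ x : Cz K, T x = (∑' i, x i) • e K 0) →
      ¬ ∃ S : Cz K →L[K] Cz K, ∀ x z : Cz K, pr (T x) z = pr x (S z)) := by
  have := IsUltrametricDist.isUltrametricDist_of_isNonarchimedean_norm hna
  refine ⟨⟨(ZeroAtInftyContinuousMap.tsumCLM K).smulRight (e K 0), fun x => rfl⟩, ?_⟩
  rintro T hT ⟨S, hS⟩
  have hSe : ∀ n, S (e K 0) n = 1 := fun n => by
    simpa [hT, tsum_e, pr_e_left, e_apply] using (hS (e K n) (e K 0)).symm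
  exact one_ne_zero (ZeroAtInftyContinuousMap.eq_zero_of_forall_apply_eq hSe)
end
end
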